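/- Under the hypotheses of the radii polynomial theorem with $p(r_0) < 0$ for some $r_0 > 0$, the Newton-like operator $T(a) = a - AF(a)$ maps the closed ball $\overline{B_{r_0}(\bar a)}$ into the open ball $B_{r_0}(\bar a)$ and is a contraction on $\overline{B_{r_0}(\bar a)}$ with Lipschitz constant $\kappa = Z_0 + Z_1 + Z_2(r_0) r_0 < 1$. -/

import Mathlib

/-!
The derivative of `T` at `a` is `I - A DF(a)`, which splits as
`(I - A A†) - A (DF(ā) - A†) - A (DF(a) - DF(ā))`; on the closed ball of radius `r₀` the three
pieces are bounded by `Z₀`, `Z₁` and `Z₂(r₀) r₀`, so the mean value inequality makes `T`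
`κ`-Lipschitz there. Since `‖T ā - ā‖ ≤ Y₀`, every `a` in the closed ball satisfies
`‖T a - ā‖ ≤ κ r₀ + Y₀ = r₀ + p(r₀) < r₀`, and `κ < 1` follows from `κ r₀ < r₀ - Y₀ ≤ r₀`.
-/

open Metric Set

theorem mapsTo_closedBall_ball_of_dist_center_le {E : Type*} [PseudoMetricSpace E]
    {T : E → E} {c : E} {r κ Y₀ : ℝ} (hκ : 0 ≤ κ)
    (hT : ∀ x ∈ closedBall c r, dist (T x) (T c) ≤ κ * dist x c)
    (hc : dist (T c) c ≤ Y₀) (hr : κ * r + Y₀ < r) :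
    MapsTo T (closedBall c r) (ball c r) := fun x hx =>
  calc dist (T x) c ≤ dist (T x) (T c) + dist (T c) c := dist_triangle _ _ _
    _ ≤ κ * r + Y₀ := add_le_add ((hT x hx).trans (by gcongr; exact hx)) hc
    _ < r := hr

theorem ContinuousLinearMap.norm_id_sub_comp_le {𝕜 X Y : Type*} [NontriviallyNormedField 𝕜]
    [SeminormedAddCommGroup X] [NormedSpace 𝕜 X] [SeminormedAddCommGroup Y] [NormedSpace 𝕜 Y]
    (A : Y →L[𝕜] X) (A' B₀ B : X →L[𝕜] Y) :
    ‖ContinuousLinearMap.id 𝕜 X - A.comp B‖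
      ≤ ‖ContinuousLinearMap.id 𝕜 X - A.comp A'‖ + ‖A.comp (B₀ - A')‖ + ‖A.comp (B - B₀)‖ := by
  have hsplit : ContinuousLinearMap.id 𝕜 X - A.comp B
      = (ContinuousLinearMap.id 𝕜 X - A.comp A') - A.comp (B₀ - A') - A.comp (B - B₀) := by
    simp only [comp_sub]
    abel
  rw [hsplit]
  exact (norm_sub_le _ _).trans (add_le_add_left (norm_sub_le _ _) _)

theorem newton_operator_contraction_general
    {X Y : Type*} [NormedAddCommGroup X] [NormedSpace ℝ X]
    [NormedAddCommGroup Y] [NormedSpace ℝ Y]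
    (F : X → Y) (DF : X → X →L[ℝ] Y) (hF : ∀ x, HasFDerivAt F (DF x) x)
    (abar : X) (Adag : X →L[ℝ] Y) (A : Y →L[ℝ] X)
    (Y0 Z0 Z1 : ℝ)
    (Z2 : Polynomial ℝ)
    (hY0 : ‖A (F abar)‖ ≤ Y0)
    (hZ0 : ‖ContinuousLinearMap.id ℝ X - A.comp Adag‖ ≤ Z0)
    (hZ1 : ‖A.comp (DF abar - Adag)‖ ≤ Z1)
    (hZ2b : ∀ r : ℝ, 0 < r → ∀ b ∈ Metric.closedBall abar r,
      ‖A.comp (DF b - DF abar)‖ ≤ Z2.eval r * r)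
    (r0 : ℝ) (hr0 : 0 < r0)
    (hp : Z2.eval r0 * r0 ^ 2 - (1 - Z0 - Z1) * r0 + Y0 < 0)
    (T : X → X) (hT : ∀ a, T a = a - A (F a)) :
    (∀ a ∈ Metric.closedBall abar r0, T a ∈ Metric.ball abar r0) ∧
    Z0 + Z1 + Z2.eval r0 * r0 < 1 ∧
    (∀ x ∈ Metric.closedBall abar r0, ∀ y ∈ Metric.closedBall abar r0,
      ‖T x - T y‖ ≤ (Z0 + Z1 + Z2.eval r0 * r0) * ‖x - y‖) := by
  obtain rfl : T = fun a => a - A (F a) := funext hT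
  set κ := Z0 + Z1 + Z2.eval r0 * r0
  have hDT : ∀ a, HasFDerivAt (fun a => a - A (F a))
      (ContinuousLinearMap.id ℝ X - A.comp (DF a)) a := fun a =>
    (hasFDerivAt_id a).sub (A.hasFDerivAt.comp a (hF a))
  have hDT_le : ∀ a ∈ closedBall abar r0, ‖ContinuousLinearMap.id ℝ X - A.comp (DF a)‖ ≤ κ :=
    fun a ha => (A.norm_id_sub_comp_le Adag (DF abar) (DF a)).trans
      (add_le_add (add_le_add hZ0 hZ1) (hZ2b r0 hr0 a ha))
  have hlip : ∀ x ∈ closedBall abar r0, ∀ y ∈ closedBall abar r0,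
      ‖(x - A (F x)) - (y - A (F y))‖ ≤ κ * ‖x - y‖ := fun x hx y hy =>
    (convex_closedBall abar r0).norm_image_sub_le_of_norm_hasFDerivWithin_le
      (fun z _ => (hDT z).hasFDerivWithinAt) hDT_le hy hx
  have hκ_nonneg : 0 ≤ κ := (norm_nonneg _).trans (hDT_le abar (mem_closedBall_self hr0.le))
  have hY0_nonneg : 0 ≤ Y0 := (norm_nonneg _).trans hY0
  have hκr0 : κ * r0 + Y0 < r0 := by linear_combination hp
  refine ⟨?_, by nlinarith, hlip⟩
  refine mapsTo_closedBall_ball_of_dist_center_le hκ_nonneg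
    (fun x hx => ?_) (by simpa [dist_eq_norm] using hY0) hκr0
  simpa only [dist_eq_norm] using hlip x hx abar (mem_closedBall_self hr0.le)

/-- Under the hypotheses of the radii polynomial theorem with `p r0 < 0`, the Newton-like
operator `T a = a - A (F a)` maps the closed ball of radius `r0` about `abar` into the open
ball, and is a contraction on the closed ball with Lipschitz constant
`κ = Z0 + Z1 + Z2.eval r0 * r0 < 1`. -/
theorem newton_operator_contraction
    {X Y : Type*} [NormedAddCommGroup X] [NormedSpace ℝ X] [CompleteSpace X]
    [NormedAddCommGroup Y] [NormedSpace ℝ Y] [CompleteSpace Y]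
    (F : X → Y) (DF : X → X →L[ℝ] Y) (hF : ∀ x, HasFDerivAt F (DF x) x)
    (abar : X) (Adag : X →L[ℝ] Y) (A : Y →L[ℝ] X) (hA : Function.Injective A)
    (Y0 Z0 Z1 : ℝ) (hY0' : 0 ≤ Y0) (hZ0' : 0 ≤ Z0) (hZ1' : 0 ≤ Z1)
    (Z2 : Polynomial ℝ) (hZ2 : ∀ i, 0 ≤ Z2.coeff i)
    (hY0 : ‖A (F abar)‖ ≤ Y0)
    (hZ0 : ‖ContinuousLinearMap.id ℝ X - A.comp Adag‖ ≤ Z0)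
    (hZ1 : ‖A.comp (DF abar - Adag)‖ ≤ Z1)
    (hZ2b : ∀ r : ℝ, 0 < r → ∀ b ∈ Metric.closedBall abar r,
      ‖A.comp (DF b - DF abar)‖ ≤ Z2.eval r * r)
    (r0 : ℝ) (hr0 : 0 < r0)
    (hp : Z2.eval r0 * r0 ^ 2 - (1 - Z0 - Z1) * r0 + Y0 < 0)
    (T : X → X) (hT : ∀ a, T a = a - A (F a)) :
    (∀ a ∈ Metric.closedBall abar r0, T a ∈ Metric.ball abar r0) ∧
    Z0 + Z1 + Z2.eval r0 * r0 < 1 ∧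
    (∀ x ∈ Metric.closedBall abar r0, ∀ y ∈ Metric.closedBall abar r0,
      ‖T x - T y‖ ≤ (Z0 + Z1 + Z2.eval r0 * r0) * ‖x - y‖) :=
  newton_operator_contraction_general F DF hF abar Adag A Y0 Z0 Z1 Z2 hY0 hZ0 hZ1 hZ2b r0 hr0 hp T
    hT
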